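/- Let ψ : [0,1]² → ℝ² be the affine map ψ(x,y) = (5π/8, −7π/8) + x·(π/4, π/4) + y·(−π/2, π/2), and let g : ℝ² → ℂ be continuous with |g(p) − φ(p)| < 0.025 for all p ∈ ψ([0,1]²). Then for all x, y ∈ [0,1]: Re g(ψ(x,0)) < −0.025, Re g(ψ(x,1)) > 0.025, Im g(ψ(0,y)) < −0.025, and Im g(ψ(1,y)) > 0.025. -/

import Mathlib

open Real

/-- The function `φ(x,y) = (1/3)(e^{ix} + e^{iy} + e^{i(x+y)})`. -/
noncomputable def phi : ℝ × ℝ → ℂ := fun p =>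
  (1 / 3) * (Complex.exp (Complex.I * p.1) + Complex.exp (Complex.I * p.2) +
    Complex.exp (Complex.I * (p.1 + p.2)))

/-- The affine map `ψ(x,y) = (5π/8, −7π/8) + x·(π/4, π/4) + y·(−π/2, π/2)`. -/
noncomputable def psi : ℝ × ℝ → ℝ × ℝ := fun p =>
  (5 * π / 8 + p.1 * (π / 4) + p.2 * (-(π / 2)),
   -(7 * π / 8) + p.1 * (π / 4) + p.2 * (π / 2))

/-!
Write `ψ(x, y) = (u + d, u - d)` with `u = xπ/4 - π/8 ∈ [-π/8, π/8]` and
`d = 3π/4 - yπ/2 ∈ [π/4, 3π/4]`. The addition formulas give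
`3 Re φ(u + d, u - d) = 2 cos² u + 2 cos d cos u - 1` and
`3 Im φ(u + d, u - d) = 2 sin u cos d + sin 2u`. Each edge of the square fixes `d`
(bottom/top: `d = 3π/4, π/4`) or `u` (left/right: `u = ∓π/8`), and the elementary bounds
`cos u ≥ √2/2`, `|cos d| ≤ √2/2`, `sin (π/8) < π/8 < 0.3927` put `φ` at distance at least
`0.05` on the required side of the relevant axis, so a `0.025`-approximation `g` stays beyond
`±0.025`.
-/

lemma phi_re (a b : ℝ) : (phi (a, b)).re = (cos a + cos b + cos (a + b)) / 3 := by
  simp [phi, Complex.exp_re, ← Complex.ofReal_add, div_eq_inv_mul]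

lemma phi_im (a b : ℝ) : (phi (a, b)).im = (sin a + sin b + sin (a + b)) / 3 := by
  simp [phi, Complex.exp_im, ← Complex.ofReal_add, div_eq_inv_mul]

lemma three_mul_phi_re_add_sub (u d : ℝ) :
    3 * (phi (u + d, u - d)).re = 2 * cos u ^ 2 + 2 * cos d * cos u - 1 := by
  rw [phi_re, add_add_sub_cancel, ← two_mul, cos_two_mul, cos_add, cos_sub]
  ring

lemma three_mul_phi_im_add_sub (u d : ℝ) :
    3 * (phi (u + d, u - d)).im = 2 * sin u * cos d + sin (2 * u) := by
  rw [phi_im, add_add_sub_cancel, ← two_mul, sin_add, sin_sub]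
  ring

lemma sqrt_two_div_two_le_cos {u : ℝ} (hu : |u| ≤ π / 4) : √2 / 2 ≤ cos u := by
  rw [← cos_pi_div_four, ← cos_abs u]
  exact cos_le_cos_of_nonneg_of_le_pi (abs_nonneg u) (by linarith [pi_pos]) hu

lemma cos_three_pi_div_four : cos (3 * π / 4) = -(√2 / 2) := by
  rw [show 3 * π / 4 = π - π / 4 by ring, cos_pi_sub, cos_pi_div_four]

lemma abs_cos_le_sqrt_two_div_two {d : ℝ} (hd : d ∈ Set.Icc (π / 4) (3 * π / 4)) :
    |cos d| ≤ √2 / 2 := by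
  obtain ⟨hd₁, hd₂⟩ := hd
  have hpi := pi_pos
  refine abs_le.2 ⟨?_, ?_⟩
  · rw [← cos_three_pi_div_four]
    exact cos_le_cos_of_nonneg_of_le_pi (by linarith) (by linarith) hd₂
  · rw [← cos_pi_div_four]
    exact cos_le_cos_of_nonneg_of_le_pi (by linarith) (by linarith) hd₁

lemma one_point_four_le_sqrt_two : (1.4 : ℝ) ≤ √2 :=
  Real.le_sqrt_of_sq_le (by norm_num)

lemma sqrt_two_mul_sin_pi_div_eight_le : √2 * sin (π / 8) ≤ √2 / 2 - 0.15 := by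
  have hsin : sin (π / 8) < 0.3927 := by
    linarith [sin_lt (by positivity : 0 < π / 8), pi_lt_d4]
  nlinarith [one_point_four_le_sqrt_two]

lemma re_phi_add_sub_three_pi_div_four_le {u : ℝ} (hu : |u| ≤ π / 4) :
    (phi (u + 3 * π / 4, u - 3 * π / 4)).re ≤ -0.05 := by
  have h := three_mul_phi_re_add_sub u (3 * π / 4)
  rw [cos_three_pi_div_four] at h
  have hc₀ : 0 ≤ cos u :=
    (div_nonneg (sqrt_nonneg 2) zero_le_two).trans (sqrt_two_div_two_le_cos hu)
  nlinarith [cos_le_one u, one_point_four_le_sqrt_two]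

lemma re_phi_add_sub_pi_div_four_ge {u : ℝ} (hu : |u| ≤ π / 4) :
    0.05 ≤ (phi (u + π / 4, u - π / 4)).re := by
  have h := three_mul_phi_re_add_sub u (π / 4)
  rw [cos_pi_div_four] at h
  have hc := sqrt_two_div_two_le_cos hu
  nlinarith [one_point_four_le_sqrt_two]

lemma im_phi_add_sub_neg_pi_div_eight_le {d : ℝ} (hd : d ∈ Set.Icc (π / 4) (3 * π / 4)) :
    (phi (-(π / 8) + d, -(π / 8) - d)).im ≤ -0.05 := by
  have h := three_mul_phi_im_add_sub (-(π / 8)) d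
  rw [show 2 * -(π / 8) = -(π / 4) by ring, sin_neg, sin_neg, sin_pi_div_four] at h
  have hcos := abs_le.1 (abs_cos_le_sqrt_two_div_two hd)
  have hsin : 0 ≤ sin (π / 8) :=
    sin_nonneg_of_nonneg_of_le_pi (by positivity) (by linarith [pi_pos])
  nlinarith [sqrt_two_mul_sin_pi_div_eight_le]

lemma im_phi_add_sub_pi_div_eight_ge {d : ℝ} (hd : d ∈ Set.Icc (π / 4) (3 * π / 4)) :
    0.05 ≤ (phi (π / 8 + d, π / 8 - d)).im := by
  have h := three_mul_phi_im_add_sub (π / 8) d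
  rw [show 2 * (π / 8) = π / 4 by ring, sin_pi_div_four] at h
  have hcos := abs_le.1 (abs_cos_le_sqrt_two_div_two hd)
  have hsin : 0 ≤ sin (π / 8) :=
    sin_nonneg_of_nonneg_of_le_pi (by positivity) (by linarith [pi_pos])
  nlinarith [sqrt_two_mul_sin_pi_div_eight_le]

lemma psi_eq_add_sub (x y : ℝ) :
    psi (x, y) = (x * (π / 4) - π / 8 + (3 * π / 4 - y * (π / 2)),
      x * (π / 4) - π / 8 - (3 * π / 4 - y * (π / 2))) := by
  simp only [psi, Prod.mk.injEq]
  constructor <;> ring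

lemma abs_mul_pi_div_four_sub_pi_div_eight_le {x : ℝ} (hx : x ∈ Set.Icc (0 : ℝ) 1) :
    |x * (π / 4) - π / 8| ≤ π / 4 := by
  obtain ⟨hx₀, hx₁⟩ := hx
  rw [abs_le]
  constructor <;> nlinarith [pi_pos]

lemma three_pi_div_four_sub_mul_pi_div_two_mem {y : ℝ} (hy : y ∈ Set.Icc (0 : ℝ) 1) :
    3 * π / 4 - y * (π / 2) ∈ Set.Icc (π / 4) (3 * π / 4) := by
  obtain ⟨hy₀, hy₁⟩ := hy
  constructor <;> nlinarith [pi_pos]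

lemma re_phi_psi_bottom_le {x : ℝ} (hx : x ∈ Set.Icc (0 : ℝ) 1) :
    (phi (psi (x, 0))).re ≤ -0.05 := by
  rw [psi_eq_add_sub, zero_mul, sub_zero]
  exact re_phi_add_sub_three_pi_div_four_le (abs_mul_pi_div_four_sub_pi_div_eight_le hx)

lemma re_phi_psi_top_ge {x : ℝ} (hx : x ∈ Set.Icc (0 : ℝ) 1) :
    0.05 ≤ (phi (psi (x, 1))).re := by
  rw [psi_eq_add_sub, show 3 * π / 4 - 1 * (π / 2) = π / 4 by ring]
  exact re_phi_add_sub_pi_div_four_ge (abs_mul_pi_div_four_sub_pi_div_eight_le hx)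

lemma im_phi_psi_left_le {y : ℝ} (hy : y ∈ Set.Icc (0 : ℝ) 1) :
    (phi (psi (0, y))).im ≤ -0.05 := by
  rw [psi_eq_add_sub, show 0 * (π / 4) - π / 8 = -(π / 8) by ring]
  exact im_phi_add_sub_neg_pi_div_eight_le (three_pi_div_four_sub_mul_pi_div_two_mem hy)

lemma im_phi_psi_right_ge {y : ℝ} (hy : y ∈ Set.Icc (0 : ℝ) 1) :
    0.05 ≤ (phi (psi (1, y))).im := by
  rw [psi_eq_add_sub, show 1 * (π / 4) - π / 8 = π / 8 by ring]
  exact im_phi_add_sub_pi_div_eight_ge (three_pi_div_four_sub_mul_pi_div_two_mem hy)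

lemma abs_re_sub_re_lt {z w : ℂ} {ε : ℝ} (h : ‖z - w‖ < ε) : |z.re - w.re| < ε := by
  simpa using (Complex.abs_re_le_norm (z - w)).trans_lt h

lemma abs_im_sub_im_lt {z w : ℂ} {ε : ℝ} (h : ‖z - w‖ < ε) : |z.im - w.im| < ε := by
  simpa using (Complex.abs_im_le_norm (z - w)).trans_lt h

theorem g_psi_boundary_estimates (g : ℝ × ℝ → ℂ)
    (happrox : ∀ p ∈ psi '' (Set.Icc (0 : ℝ) 1 ×ˢ Set.Icc (0 : ℝ) 1),
      ‖g p - phi p‖ < 0.025) :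
    ∀ x ∈ Set.Icc (0 : ℝ) 1, ∀ y ∈ Set.Icc (0 : ℝ) 1,
      (g (psi (x, 0))).re < -0.025 ∧ (g (psi (x, 1))).re > 0.025 ∧
      (g (psi (0, y))).im < -0.025 ∧ (g (psi (1, y))).im > 0.025 := by
  intro x hx y hy
  have h₀ : (0 : ℝ) ∈ Set.Icc (0 : ℝ) 1 := ⟨le_rfl, zero_le_one⟩
  have h₁ : (1 : ℝ) ∈ Set.Icc (0 : ℝ) 1 := ⟨zero_le_one, le_rfl⟩
  have near {a b : ℝ} (ha : a ∈ Set.Icc (0 : ℝ) 1) (hb : b ∈ Set.Icc (0 : ℝ) 1) :=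
    happrox _ (Set.mem_image_of_mem psi (Set.mk_mem_prod ha hb))
  have bottom := abs_lt.1 (abs_re_sub_re_lt (near hx h₀))
  have top := abs_lt.1 (abs_re_sub_re_lt (near hx h₁))
  have left := abs_lt.1 (abs_im_sub_im_lt (near h₀ hy))
  have right := abs_lt.1 (abs_im_sub_im_lt (near h₁ hy))
  refine ⟨?_, ?_, ?_, ?_⟩
  · linarith [re_phi_psi_bottom_le hx]
  · linarith [re_phi_psi_top_ge hx]
  · linarith [im_phi_psi_left_le hy]
  · linarith [im_phi_psi_right_ge hy]
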